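/- (MΩ-Theorem) Let 0 ≤ q < 1 and let η_M = q²/(1 + √(1 − q²))² be the maximum efficiency. Fix X₂ ≠ 0 and regard the omega function Ω = 2·P_O − η_M·P_I as a function of X₁ alone. Then the derivative of X₁ ↦ Ω(X₁, X₂) vanishes at a point X₁ if and only if the driven flux satisfies J₁ = −((2 − η_M)/(2 + η_M))·L₁₁·X₁ at that point. -/

import Mathlib

/-! Since `P_I` depends on `X₁` only through the coupling term `q√(L₁₁L₂₂)X₁X₂`, and
`q√(L₁₁L₂₂)X₂ = J₁ - L₁₁X₁`, the derivative of `Ω` in `X₁` is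
`-T((2 + η_M)J₁ + (2 - η_M)L₁₁X₁)`. As `T > 0` and `η_M ≥ 0`, it vanishes exactly when
`J₁ = -((2 - η_M)/(2 + η_M))L₁₁X₁`. -/

/-- The driven flux `J₁ = L₁₁·X₁ + q·√(L₁₁·L₂₂)·X₂`. -/
noncomputable def fluxJ1 (L11 L22 q X2 X1 : ℝ) : ℝ :=
  L11 * X1 + q * Real.sqrt (L11 * L22) * X2

/-- The conjugate flux `J₂ = q·√(L₁₁·L₂₂)·X₁ + L₂₂·X₂`. -/
noncomputable def fluxJ2 (L11 L22 q X2 X1 : ℝ) : ℝ :=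
  q * Real.sqrt (L11 * L22) * X1 + L22 * X2

/-- The power output `P_O(X₁, X₂) = −T·J₁·X₁`. -/
noncomputable def powerOut (T L11 L22 q X2 X1 : ℝ) : ℝ :=
  -(T * (fluxJ1 L11 L22 q X2 X1 * X1))

/-- The power input `P_I(X₁, X₂) = T·J₂·X₂`. -/
noncomputable def powerIn (T L11 L22 q X2 X1 : ℝ) : ℝ :=
  T * (fluxJ2 L11 L22 q X2 X1 * X2)

/-- The maximum efficiency `η_M = q²/(1 + √(1 − q²))²`. -/
noncomputable def etaM (q : ℝ) : ℝ := q ^ 2 / (1 + Real.sqrt (1 - q ^ 2)) ^ 2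

/-- The omega function `Ω = 2·P_O − η_M·P_I`. -/
noncomputable def omegaF (T L11 L22 q X2 X1 : ℝ) : ℝ :=
  2 * powerOut T L11 L22 q X2 X1 - etaM q * powerIn T L11 L22 q X2 X1

theorem etaM_nonneg (q : ℝ) : 0 ≤ etaM q := by
  unfold etaM
  positivity

section Derivatives

variable (T L11 L22 q X2 X1 : ℝ)

theorem hasDerivAt_fluxJ1 : HasDerivAt (fluxJ1 L11 L22 q X2) L11 X1 :=
  (((hasDerivAt_id X1).const_mul L11).add_const (q * √(L11 * L22) * X2)).congr_deriv (mul_one _)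

theorem hasDerivAt_fluxJ2 : HasDerivAt (fluxJ2 L11 L22 q X2) (q * √(L11 * L22)) X1 :=
  (((hasDerivAt_id X1).const_mul (q * √(L11 * L22))).add_const (L22 * X2)).congr_deriv
    (mul_one _)

theorem hasDerivAt_powerOut :
    HasDerivAt (powerOut T L11 L22 q X2) (-T * (L11 * X1 + fluxJ1 L11 L22 q X2 X1)) X1 :=
  (((hasDerivAt_fluxJ1 L11 L22 q X2 X1).mul (hasDerivAt_id X1)).const_mul T).neg.congr_deriv
    (by simp only [id]; ring)

theorem hasDerivAt_powerIn :
    HasDerivAt (powerIn T L11 L22 q X2) (T * (q * √(L11 * L22) * X2)) X1 :=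
  ((hasDerivAt_fluxJ2 L11 L22 q X2 X1).mul_const X2).const_mul T

theorem hasDerivAt_omegaF :
    HasDerivAt (omegaF T L11 L22 q X2)
      (-T * ((2 + etaM q) * fluxJ1 L11 L22 q X2 X1 + (2 - etaM q) * (L11 * X1))) X1 :=
  (((hasDerivAt_powerOut T L11 L22 q X2 X1).const_mul 2).sub
    ((hasDerivAt_powerIn T L11 L22 q X2 X1).const_mul (etaM q))).congr_deriv
    (by unfold fluxJ1; ring)

end Derivatives

theorem eq_neg_div_mul_iff_add_eq_zero {K : Type*} [Field K] {J a η : K} (hη : 2 + η ≠ 0) :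
    J = -((2 - η) / (2 + η)) * a ↔ (2 + η) * J + (2 - η) * a = 0 := by
  rw [neg_mul, div_mul_eq_mul_div, eq_neg_iff_add_eq_zero, add_div_eq_mul_add_div _ _ hη,
    div_eq_zero_iff, or_iff_left hη, mul_comm J]

theorem MOmega_theorem_general (T L11 L22 q X2 : ℝ) (hT : 0 < T) (X1 : ℝ) :
    deriv (fun y : ℝ => omegaF T L11 L22 q X2 y) X1 = 0 ↔
      fluxJ1 L11 L22 q X2 X1 = -((2 - etaM q) / (2 + etaM q)) * (L11 * X1) := by
  have hη : 2 + etaM q ≠ 0 := by linarith [etaM_nonneg q]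
  rw [(hasDerivAt_omegaF T L11 L22 q X2 X1).deriv, mul_eq_zero, neg_eq_zero,
    or_iff_right hT.ne', eq_neg_div_mul_iff_add_eq_zero hη]

/-- (MΩ-Theorem) Let `0 ≤ q < 1`. For fixed `X₂ ≠ 0`, the derivative of `X₁ ↦ Ω(X₁, X₂)`
vanishes at `X₁` iff the driven flux satisfies `J₁ = −((2 − η_M)/(2 + η_M))·L₁₁·X₁` there. -/
theorem MOmega_theorem (T L11 L22 q X2 : ℝ) (hT : 0 < T) (hL11 : 0 < L11) (hL22 : 0 < L22)
    (hq0 : 0 ≤ q) (hq1 : q < 1) (hX2 : X2 ≠ 0) (X1 : ℝ) :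
    deriv (fun y : ℝ => omegaF T L11 L22 q X2 y) X1 = 0 ↔
      fluxJ1 L11 L22 q X2 X1 = -((2 - etaM q) / (2 + etaM q)) * (L11 * X1) :=
  MOmega_theorem_general T L11 L22 q X2 hT X1
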